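/- Cyclic-map invariance under an adjacent unprimed–primed swap: let R′ = M ∪̇ N′ be a marked alphabet on {1,…,m+n} in which r ∈ M is the k-th smallest unprimed letter and r+1 ∈ N is the ℓ-th smallest primed letter, and let R″ be the marked alphabet obtained from R′ by instead taking r primed and r+1 unprimed (so that in R″, r is the ℓ-th smallest primed letter and r+1 the k-th smallest unprimed letter), all other letters retaining their markings. Then for all partitions μ ⊆ λ, all x = (x_1,…,x_m), y = (y_1,…,y_n) and all doubly infinite families a = (a_t)_{t∈ℤ} in a commutative ring, s^{R′}_{λ/μ}(x,y|a) = s^{R″}_{λ/μ}(x,y|a). -/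

import Mathlib

namespace SuperSchur

variable {A : Type*} [CommRing A]

/-- The content of a box `(i, j)` (rows and columns indexed from 0;
row `i` occupies columns `μ_i ≤ j < λ_i`, so the content is `j - i`). -/
def content (p : ℕ × ℕ) : ℤ := (p.2 : ℤ) - (p.1 : ℤ)

/-- The cells of the skew Young diagram `F^{λ/μ}` (0-indexed rows and columns). -/
def cells (lam mu : List ℕ) : Finset (ℕ × ℕ) :=
  (Finset.range lam.length).biUnion fun i =>
    (Finset.Ico (mu.getD i 0) (lam.getD i 0)).image fun j => (i, j)

/-- `l` is a partition: a weakly decreasing list of positive integers. -/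
def IsPartition (l : List ℕ) : Prop := l.Pairwise (· ≥ ·) ∧ ∀ x ∈ l, 0 < x

/-- `μ ⊆ λ`. -/
def Contained (mu lam : List ℕ) : Prop := ∀ i, mu.getD i 0 ≤ lam.getD i 0

/-- `T` is a skew supertableau on the cell set `C` over the marked alphabet `Fin NA`
(letters in their natural order), where `prm r = true` means the letter `r` is primed:
entries weakly increase along rows and down columns, no two equal unprimed entries lie
in the same column, and no two equal primed entries lie in the same row. -/
def IsSuperTab {NA : ℕ} (C : Finset (ℕ × ℕ)) (prm : Fin NA → Bool)
    (T : {p // p ∈ C} → Fin NA) : Prop :=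
  (∀ u v : {p // p ∈ C}, u.1.1 = v.1.1 → u.1.2 ≤ v.1.2 → T u ≤ T v) ∧
  (∀ u v : {p // p ∈ C}, u.1.2 = v.1.2 → u.1.1 ≤ v.1.1 → T u ≤ T v) ∧
  (∀ u v : {p // p ∈ C}, u.1.2 = v.1.2 → u.1.1 ≠ v.1.1 → prm (T u) = false → T u ≠ T v) ∧
  (∀ u v : {p // p ∈ C}, u.1.1 = v.1.1 → u.1.2 ≠ v.1.2 → prm (T u) = true → T u ≠ T v)

open Classical in
/-- Generic weighted sum over all skew supertableaux on `C`: the weight of the letter `r`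
placed in a box of content `c` is `w r c`. -/
noncomputable def tabSum {NA : ℕ} (C : Finset (ℕ × ℕ)) (prm : Fin NA → Bool)
    (w : Fin NA → ℤ → A) : A :=
  ∑ T ∈ Finset.univ.filter (fun T : {p // p ∈ C} → Fin NA => IsSuperTab C prm T),
    ∏ u : {p // p ∈ C}, w (T u) (content u.1)

/-- The (1-based) index of the letter `r` among the letters with the same marking:
if `r` is the k-th smallest unprimed letter then `idx prm r = k`, and similarly
for primed letters. -/
def idx {NA : ℕ} (prm : Fin NA → Bool) (r : Fin NA) : ℕ :=
  (Finset.univ.filter fun r' => prm r' = prm r ∧ r' ≤ r).card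

/-- `σ(r) = #{i ∈ M : i ≤ r} - #{j ∈ N : j ≤ r}`, plus `1` if `r` is primed. -/
def sigma {NA : ℕ} (prm : Fin NA → Bool) (r : Fin NA) : ℤ :=
  ((Finset.univ.filter fun r' : Fin NA => prm r' = false ∧ r' ≤ r).card : ℤ)
    - ((Finset.univ.filter fun r' : Fin NA => prm r' = true ∧ r' ≤ r).card : ℤ)
    + (if prm r then 1 else 0)

/-- Ninth-variation weights: the k-th unprimed letter in a box of content `c`
carries weight `X k c`, and the ℓ-th primed letter carries `Y ℓ c`. -/
def wNinth {m n NA : ℕ} (prm : Fin NA → Bool) (X : Fin m → ℤ → A) (Y : Fin n → ℤ → A) :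
    Fin NA → ℤ → A := fun r c =>
  if prm r then (if h : idx prm r - 1 < n then Y ⟨idx prm r - 1, h⟩ c else 0)
  else (if h : idx prm r - 1 < m then X ⟨idx prm r - 1, h⟩ c else 0)

/-- Factorial supersymmetric weights: the k-th unprimed letter `r` in a box of content `c`
carries weight `x k + a (σ(r) + c)`, and the ℓ-th primed letter `r` carries
`y ℓ - a (σ(r) + c)`. -/
def wFact {m n NA : ℕ} (prm : Fin NA → Bool) (x : Fin m → A) (y : Fin n → A) (a : ℤ → A) :
    Fin NA → ℤ → A := fun r c =>
  if prm r then
    (if h : idx prm r - 1 < n then y ⟨idx prm r - 1, h⟩ else 0) - a (sigma prm r + c)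
  else
    (if h : idx prm r - 1 < m then x ⟨idx prm r - 1, h⟩ else 0) + a (sigma prm r + c)

/-- The marked alphabet `1 < 2 < ⋯ < m < 1′ < 2′ < ⋯ < n′`. -/
def prmFirst (m n : ℕ) : Fin (m + n) → Bool := fun r => decide (m ≤ (r : ℕ))

/-- The classical (first variation) supersymmetric skew Schur function `s_{λ/μ}(x,y)`. -/
noncomputable def superSchur (lam mu : List ℕ) {m n : ℕ} (x : Fin m → A) (y : Fin n → A) : A :=
  tabSum (cells lam mu) (prmFirst m n) (wNinth (prmFirst m n) (fun k _ => x k) (fun l _ => y l))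

/-- The row (counted from the top, 0-based) of the box of content `c` in the canonical
realisation of the segment of the cutting strip ending at content `d`:
the number of vertical steps strictly between `c` and `d`. -/
noncomputable def ribRow (dir : ℤ → Bool) (d c : ℤ) : ℕ :=
  ((Finset.Ioc c d).filter fun c' => dir c' = true).card

/-- The shift `m(p,q)`: the content (within the cutting strip) of the box of the ribbon
`φ_{ad}` that lies on the main diagonal of the skew diagram whose outer rim is `φ_{ad}`. -/
noncomputable def mShift (dir : ℤ → Bool) (a d : ℤ) : ℤ := a + (ribRow dir d a : ℤ)

/-- The ribbon `φ_{ad}` of the cutting strip, realised canonically as a skew diagram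
in its own right (its box of cutting-strip content `c` gets standard content
`c - mShift dir a d`). -/
noncomputable def ribbonCells (dir : ℤ → Bool) (a d : ℤ) : Finset (ℕ × ℕ) :=
  (Finset.Icc a d).image fun c =>
    (ribRow dir d c, (c + (ribRow dir d c : ℤ) - mShift dir a d).toNat)

/-- The cell set `S` coincides in shape and contents with the segment `φ_{ab}` of the
cutting strip described by `dir` (where `dir c = true` iff the box of content `c - 1`
lies below the box of content `c`, and `dir c = false` iff it lies to its left). -/
def StripMatches (dir : ℤ → Bool) (a b : ℤ) (S : Finset (ℕ × ℕ)) : Prop :=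
  (∀ c : ℤ, (a ≤ c ∧ c ≤ b) ↔ ∃ u ∈ S, content u = c) ∧
  (∀ u ∈ S, ∀ v ∈ S, content u = content v → u = v) ∧
  (∀ u ∈ S, ∀ v ∈ S, content v = content u + 1 →
    if dir (content v) then v.1 + 1 = u.1 ∧ v.2 = u.2 else v.1 = u.1 ∧ u.2 + 1 = v.2)

/-- `(dir, ab, θ)` is an outside decomposition of `F^{λ/μ}`: the strips `θ p` are
pairwise disjoint with union the whole diagram, each `θ p` coincides in shape
and contents with the segment `φ_{(ab p).1, (ab p).2}` of the common cutting strip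
described by `dir`, the starting box of each strip lies on the left or bottom boundary,
the ending box of each strip lies on the right or top boundary, and the cutting strip
contains a box of every relevant content occurring in the diagram. -/
def OutsideDecomp (lam mu : List ℕ) {s : ℕ} (dir : ℤ → Bool)
    (ab : Fin s → ℤ × ℤ) (θ : Fin s → Finset (ℕ × ℕ)) : Prop :=
  (∀ p q : Fin s, p ≠ q → Disjoint (θ p) (θ q)) ∧
  (Finset.univ.biUnion θ = cells lam mu) ∧
  (∀ p : Fin s, StripMatches dir (ab p).1 (ab p).2 (θ p)) ∧
  (∀ p : Fin s, ∀ u ∈ θ p, content u = (ab p).1 →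
    u.2 = 0 ∨ (u.1, u.2 - 1) ∉ cells lam mu ∨ (u.1 + 1, u.2) ∉ cells lam mu) ∧
  (∀ p : Fin s, ∀ u ∈ θ p, content u = (ab p).2 →
    (u.1, u.2 + 1) ∉ cells lam mu ∨ u.1 = 0 ∨ (u.1 - 1, u.2) ∉ cells lam mu) ∧
  (∀ p q : Fin s, ∀ c : ℤ, (ab p).1 ≤ c → c ≤ (ab q).2 → ∃ u ∈ cells lam mu, content u = c)

/-- Two boxes are edgewise adjacent. -/
def CellAdj (u v : ℕ × ℕ) : Prop :=
  (u.1 = v.1 ∧ (u.2 + 1 = v.2 ∨ v.2 + 1 = u.2)) ∨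
  (u.2 = v.2 ∧ (u.1 + 1 = v.1 ∨ v.1 + 1 = u.1))

/-- `C` is edgewise connected. -/
def ConnectedCells (C : Finset (ℕ × ℕ)) : Prop :=
  ∀ u ∈ C, ∀ v ∈ C,
    Relation.ReflTransGen (fun p q => p ∈ C ∧ q ∈ C ∧ CellAdj p q) u v

/-- `C` contains no 2×2 block of boxes. -/
def NoTwoByTwo (C : Finset (ℕ × ℕ)) : Prop :=
  ∀ i j : ℕ, ¬((i, j) ∈ C ∧ (i + 1, j) ∈ C ∧ (i, j + 1) ∈ C ∧ (i + 1, j + 1) ∈ C)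

/-- `C` is a ribbon: nonempty, edgewise connected, with no 2×2 block of boxes. -/
def IsRibbon (C : Finset (ℕ × ℕ)) : Prop :=
  C.Nonempty ∧ ConnectedCells C ∧ NoTwoByTwo C

/-- `T` is an ordered Young tableau on `C`: entries weakly increase along rows and
down columns, and strictly increase down diagonals. -/
def IsOYT {nL : ℕ} (C : Finset (ℕ × ℕ)) (T : {p // p ∈ C} → Fin nL) : Prop :=
  (∀ u v : {p // p ∈ C}, u.1.1 = v.1.1 → u.1.2 ≤ v.1.2 → T u ≤ T v) ∧
  (∀ u v : {p // p ∈ C}, u.1.2 = v.1.2 → u.1.1 ≤ v.1.1 → T u ≤ T v) ∧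
  (∀ u v : {p // p ∈ C}, u.1.1 + 1 = v.1.1 → u.1.2 + 1 = v.1.2 → T u < T v)

/-- The number `h(T)` of horizontally adjacent pairs of equal entries. -/
def horizPairs {nL : ℕ} (C : Finset (ℕ × ℕ)) (T : {p // p ∈ C} → Fin nL) : ℕ :=
  (Finset.univ.filter fun uv : {p // p ∈ C} × {p // p ∈ C} =>
    uv.1.1.1 = uv.2.1.1 ∧ uv.1.1.2 + 1 = uv.2.1.2 ∧ T uv.1 = T uv.2).card

/-- The number `v(T)` of vertically adjacent pairs of equal entries. -/
def vertPairs {nL : ℕ} (C : Finset (ℕ × ℕ)) (T : {p // p ∈ C} → Fin nL) : ℕ :=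
  (Finset.univ.filter fun uv : {p // p ∈ C} × {p // p ∈ C} =>
    uv.1.1.2 = uv.2.1.2 ∧ uv.1.1.1 + 1 = uv.2.1.1 ∧ T uv.1 = T uv.2).card

open Classical in
/-- Bachmann's ordered-Young-tableau Schur function of the cell set `C`. -/
noncomputable def bacSum (C : Finset (ℕ × ℕ)) {nL : ℕ} (F : Fin nL → ℤ → A) (t : A) : A :=
  ∑ T ∈ Finset.univ.filter (fun T : {p // p ∈ C} → Fin nL => IsOYT C T),
    t ^ vertPairs C T * (1 - t) ^ horizPairs C T *
      ∏ u : {p // p ∈ C}, F (T u) (content u.1)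

/-- Molev's factorial supersymmetric weights on the alphabet
`n′ < ⋯ < 2′ < 1′ < 1 < 2 < ⋯ < m` (position `p < n` is the letter `(n-p)′`,
position `n + k - 1` is the letter `k`): the letter `k` in a box of content `c`
carries weight `x k + a (k + c)` and the letter `ℓ′` carries `y ℓ - a (ℓ + c)`. -/
def wMol {m n : ℕ} (x : Fin m → A) (y : Fin n → A) (a : ℤ → A) : Fin (m + n) → ℤ → A :=
  fun r c =>
    if h : (r : ℕ) < n then
      y ⟨n - 1 - (r : ℕ), by omega⟩ - a (((n : ℤ) - ((r : ℕ) : ℤ)) + c)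
    else
      x ⟨(r : ℕ) - n, by have := r.isLt; omega⟩ + a ((((r : ℕ) : ℤ) - (n : ℤ) + 1) + c)


/-! Merge the letter `s = r + 1` into `r`: every tableau `T` has a *key* `κ = collapse r s ∘ T`, and
`T` is a supertableau iff its key satisfies the conditions of a supertableau away from `r, s`
and `T` obeys a local rule on the region `D = κ⁻¹(r)`. For `R′` (`r` unprimed, `s` primed) a
cell of `D` must hold `r` if `D` has a cell to its right and `s` if `D` has a cell above it; for
`R″` it must hold `s` if `D` has a cell to its left and `r` if `D` has a cell below it. Hence
the sum over the tableaux with a given key is a product of local sums over the cells, and only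
the factors at the cells of `D` differ between `R′` and `R″`.

Skew shapes, and with them the regions `D`, are order-convex. If some cell of `D` has cells of
`D` both to its right and above, then `D` also has one with cells both to its left and below,
and both products vanish. Otherwise `D` is a disjoint union of ribbons, and moving one step
right or up along a ribbon (raising the content by one) matches the forced cells for `R′` with
the forced cells for `R″`. Swapping the markings lowers `σ(r)` and `σ(s)` by one, so the weight
of a letter under `R″` at content `c` is the weight of the other letter under `R′` at content
`c - 1`, and matched cells carry equal weights. The remaining free cells, the ends of the ribbons
for `R′` and their starts for `R″`, are equally many and each contributes `x_k + y_ℓ`. -/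

open Finset

/-! ### Skew shapes are order-convex -/

theorem antitone_getD {l : List ℕ} (h : l.Pairwise (· ≥ ·)) : Antitone (l.getD · 0) := by
  intro i i' hii
  rcases lt_or_ge i' l.length with h' | h'
  · rcases hii.eq_or_lt with rfl | hlt
    · rfl
    · simp only [List.getD_eq_getElem _ _ h', List.getD_eq_getElem _ _ (hlt.trans h')]
      exact List.pairwise_iff_getElem.1 h i i' (hlt.trans h') h' hlt
  · exact (List.getD_eq_default _ _ h').trans_le (Nat.zero_le _)

theorem mem_cells {lam mu : List ℕ} {p : ℕ × ℕ} :
    p ∈ cells lam mu ↔ mu.getD p.1 0 ≤ p.2 ∧ p.2 < lam.getD p.1 0 := by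
  obtain ⟨i, j⟩ := p
  simp only [cells, mem_biUnion, mem_range, mem_image, mem_Ico, Prod.mk.injEq]
  constructor
  · rintro ⟨i, -, j, hj, rfl, rfl⟩
    exact hj
  · rintro hj
    refine ⟨i, ?_, j, hj, rfl, rfl⟩
    by_contra hi
    rw [List.getD_eq_default _ _ (not_lt.1 hi)] at hj
    omega

theorem cells_ordConnected {lam mu : List ℕ} (hlam : lam.Pairwise (· ≥ ·))
    (hmu : mu.Pairwise (· ≥ ·)) : (cells lam mu : Set (ℕ × ℕ)).OrdConnected := by
  refine ⟨fun p hp q hq w ⟨hpw, hwq⟩ => ?_⟩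
  simp only [mem_coe, mem_cells] at hp hq ⊢
  exact ⟨(antitone_getD hmu hpw.1).trans (hp.1.trans hpw.2),
    hwq.2.trans_lt (hq.2.trans_le (antitone_getD hlam hwq.1))⟩

/-! ### Indices, `σ` and weights under the swap -/

section Swap

variable {NA : ℕ} {P P' : Fin NA → Bool} {r s : Fin NA}

theorem card_filter_le_of_val_eq_succ (hs : (s : ℕ) = r + 1) (Q : Fin NA → Bool) (b : Bool) :
    #{t | Q t = b ∧ t ≤ s} = #{t | Q t = b ∧ t ≤ r} + if Q s = b then 1 else 0 := by
  have hle : ∀ t : Fin NA, t ≤ s ↔ t = s ∨ t ≤ r := fun t => by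
    simp only [Fin.le_def, Fin.ext_iff]; omega
  have hsr : ¬s ≤ r := by simp only [Fin.le_def]; omega
  split_ifs with h
  · rw [← card_insert_of_notMem
      (show s ∉ ({t | Q t = b ∧ t ≤ r} : Finset (Fin NA)) by simp [hsr])]
    congr 1; ext t
    simp only [mem_filter, mem_univ, true_and, mem_insert, hle]
    grind
  · rw [add_zero]
    congr 1; ext t
    simp only [mem_filter, mem_univ, true_and, hle]
    grind

theorem card_filter_le_swap (hs : (s : ℕ) = r + 1) (hP' : ∀ t, P' t = P (Equiv.swap r s t))
    {t : Fin NA} (ht : t ≠ r) (b : Bool) :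
    #{t' | P' t' = b ∧ t' ≤ t} = #{t' | P t' = b ∧ t' ≤ t} := by
  refine card_equiv (Equiv.swap r s) fun t' => ?_
  simp only [mem_filter, mem_univ, true_and, hP']
  refine and_congr_right fun _ => ?_
  have ht : (t : ℕ) ≠ r := fun h => ht (Fin.ext h)
  rcases eq_or_ne t' r with rfl | hr
  · rw [Equiv.swap_apply_left, Fin.le_def, Fin.le_def]; omega
  rcases eq_or_ne t' s with rfl | hs'
  · rw [Equiv.swap_apply_right, Fin.le_def, Fin.le_def]; omega
  · rw [Equiv.swap_apply_of_ne_of_ne hr hs']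

theorem idx_swap_left (hs : (s : ℕ) = r + 1) (hPr : P r = false) (hPs : P s = true)
    (hP' : ∀ t, P' t = P (Equiv.swap r s t)) : idx P' r = idx P s := by
  have hsr : s ≠ r := fun h => by simp [h] at hs
  have h := card_filter_le_of_val_eq_succ hs P' true
  rw [card_filter_le_swap hs hP' hsr] at h
  simp only [idx, hP' r, hP' s, Equiv.swap_apply_left, Equiv.swap_apply_right, hPr, hPs] at h ⊢
  simpa using h.symm

theorem idx_swap_right (hs : (s : ℕ) = r + 1) (hPr : P r = false) (hPs : P s = true)
    (hP' : ∀ t, P' t = P (Equiv.swap r s t)) : idx P' s = idx P r := by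
  have hsr : s ≠ r := fun h => by simp [h] at hs
  have h := card_filter_le_of_val_eq_succ hs P false
  rw [← card_filter_le_swap hs hP' hsr] at h
  simp only [idx, hP' s, Equiv.swap_apply_right, hPr, hPs] at h ⊢
  simpa using h

theorem sigma_succ_eq (hs : (s : ℕ) = r + 1) (hPr : P r = false) (hPs : P s = true) :
    sigma P s = sigma P r := by
  have hf := card_filter_le_of_val_eq_succ hs P false
  have ht := card_filter_le_of_val_eq_succ hs P true
  simp only [hPs] at hf ht
  simp only [sigma, hf, ht, hPr, hPs]
  push_cast; ring

theorem sigma_swap_left (hs : (s : ℕ) = r + 1) (hPr : P r = false) (hPs : P s = true)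
    (hP' : ∀ t, P' t = P (Equiv.swap r s t)) : sigma P' r = sigma P s - 1 := by
  have hsr : s ≠ r := fun h => by simp [h] at hs
  have hf := card_filter_le_of_val_eq_succ hs P' false
  have ht := card_filter_le_of_val_eq_succ hs P' true
  rw [card_filter_le_swap hs hP' hsr] at hf ht
  simp only [sigma, hP' r, hP' s, Equiv.swap_apply_left, Equiv.swap_apply_right, hPr, hPs,
    if_true, if_false, Bool.false_eq_true, add_zero] at hf ht ⊢
  rw [hf, ← ht]
  push_cast; ring

theorem sigma_swap_right (hs : (s : ℕ) = r + 1) (hPr : P r = false) (hPs : P s = true)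
    (hP' : ∀ t, P' t = P (Equiv.swap r s t)) : sigma P' s = sigma P r - 1 := by
  have hsr : s ≠ r := fun h => by simp [h] at hs
  rw [← sigma_succ_eq hs hPr hPs]
  simp only [sigma, card_filter_le_swap hs hP' hsr, hP' s, Equiv.swap_apply_right, hPr, hPs]
  simp

variable {m n : ℕ} (x : Fin m → A) (y : Fin n → A) (a : ℤ → A)

theorem wFact_swap_of_ne (hs : (s : ℕ) = r + 1) (hP' : ∀ t, P' t = P (Equiv.swap r s t))
    {t : Fin NA} (htr : t ≠ r) (hts : t ≠ s) (c : ℤ) :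
    wFact P' x y a t c = wFact P x y a t c := by
  have hP't : P' t = P t := by rw [hP', Equiv.swap_apply_of_ne_of_ne htr hts]
  have hidx : idx P' t = idx P t := by simp only [idx, hP't, card_filter_le_swap hs hP' htr]
  have hsigma : sigma P' t = sigma P t := by
    simp only [sigma, hP't, card_filter_le_swap hs hP' htr]
  simp only [wFact, hP't, hidx, hsigma]

theorem wFact_swap_left (hs : (s : ℕ) = r + 1) (hPr : P r = false) (hPs : P s = true)
    (hP' : ∀ t, P' t = P (Equiv.swap r s t)) (c : ℤ) :
    wFact P' x y a r c = wFact P x y a s (c - 1) := by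
  have hP'r : P' r = true := by rw [hP', Equiv.swap_apply_left, hPs]
  simp only [wFact, hP'r, hPs, idx_swap_left hs hPr hPs hP', sigma_swap_left hs hPr hPs hP',
    if_true]
  ring_nf

theorem wFact_swap_right (hs : (s : ℕ) = r + 1) (hPr : P r = false) (hPs : P s = true)
    (hP' : ∀ t, P' t = P (Equiv.swap r s t)) (c : ℤ) :
    wFact P' x y a s c = wFact P x y a r (c - 1) := by
  have hP's : P' s = false := by rw [hP', Equiv.swap_apply_right, hPr]
  simp only [wFact, hP's, hPr, idx_swap_right hs hPr hPs hP', sigma_swap_right hs hPr hPs hP',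
    Bool.false_eq_true, if_false]
  ring_nf

theorem wFact_add_wFact_succ (hs : (s : ℕ) = r + 1) (hPr : P r = false) (hPs : P s = true)
    (c c' : ℤ) :
    wFact P x y a r c + wFact P x y a s c = wFact P x y a r c' + wFact P x y a s c' := by
  simp only [wFact, hPr, hPs, sigma_succ_eq hs hPr hPs, Bool.false_eq_true, if_false, if_true]
  ring

end Swap

/-! ### Order-convex regions and their ribbons -/

def HasRight (D : Finset (ℕ × ℕ)) (p : ℕ × ℕ) : Prop := ∃ q ∈ D, q.1 = p.1 ∧ p.2 < q.2

def HasLeft (D : Finset (ℕ × ℕ)) (p : ℕ × ℕ) : Prop := ∃ q ∈ D, q.1 = p.1 ∧ q.2 < p.2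

def HasAbove (D : Finset (ℕ × ℕ)) (p : ℕ × ℕ) : Prop := ∃ q ∈ D, q.2 = p.2 ∧ q.1 < p.1

def HasBelow (D : Finset (ℕ × ℕ)) (p : ℕ × ℕ) : Prop := ∃ q ∈ D, q.2 = p.2 ∧ p.1 < q.1

open Classical in
noncomputable def succCell (D : Finset (ℕ × ℕ)) (p : ℕ × ℕ) : ℕ × ℕ :=
  if HasRight D p then (p.1, p.2 + 1) else (p.1 - 1, p.2)

open Classical in
noncomputable def predCell (D : Finset (ℕ × ℕ)) (p : ℕ × ℕ) : ℕ × ℕ :=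
  if HasLeft D p then (p.1, p.2 - 1) else (p.1 + 1, p.2)

open Classical in
/-- The fibre sum at a cell of the region for `R′`, where `X` and `Y` are the weights of the
unprimed `r` and the primed `s`. -/
noncomputable def hvWeight (D : Finset (ℕ × ℕ)) (X Y : ℤ → A)
    (p : ℕ × ℕ) : A :=
  (if HasAbove D p then 0 else X (content p)) + (if HasRight D p then 0 else Y (content p))

open Classical in
/-- The fibre sum at a cell of the region for `R″`, expressed through the weights of `R′`. -/
noncomputable def vhWeight (D : Finset (ℕ × ℕ)) (X Y : ℤ → A)
    (p : ℕ × ℕ) : A :=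
  (if HasBelow D p then 0 else X (content p - 1)) + (if HasLeft D p then 0 else Y (content p - 1))

section Ribbons

variable {D : Finset (ℕ × ℕ)} {p : ℕ × ℕ}

theorem mem_of_le_of_le (hD : (D : Set (ℕ × ℕ)).OrdConnected) {q w : ℕ × ℕ}
    (hp : p ∈ D) (hq : q ∈ D) (h₁ : p.1 ≤ w.1) (h₂ : p.2 ≤ w.2) (h₃ : w.1 ≤ q.1)
    (h₄ : w.2 ≤ q.2) : w ∈ D :=
  hD.out hp hq ⟨Prod.le_def.2 ⟨h₁, h₂⟩, Prod.le_def.2 ⟨h₃, h₄⟩⟩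

theorem exists_hasRight_hasAbove_iff (hD : (D : Set (ℕ × ℕ)).OrdConnected) :
    (∃ p ∈ D, HasRight D p ∧ HasAbove D p) ↔ ∃ p ∈ D, HasLeft D p ∧ HasBelow D p := by
  constructor
  · rintro ⟨p, -, ⟨q, hq, hq₁, hq₂⟩, ⟨q', hq', hq'₁, hq'₂⟩⟩
    exact ⟨(q'.1, q.2), mem_of_le_of_le hD hq' hq le_rfl (by omega) (by omega) le_rfl,
      ⟨q', hq', rfl, by omega⟩, ⟨q, hq, rfl, by omega⟩⟩
  · rintro ⟨p, -, ⟨q, hq, hq₁, hq₂⟩, ⟨q', hq', hq'₁, hq'₂⟩⟩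
    exact ⟨(q'.1, q.2), mem_of_le_of_le hD hq hq' (by omega) le_rfl le_rfl (by omega),
      ⟨q', hq', rfl, by omega⟩, ⟨q, hq, rfl, by omega⟩⟩

theorem succCell_mem (hD : (D : Set (ℕ × ℕ)).OrdConnected) (hp : p ∈ D)
    (h : HasRight D p ∨ HasAbove D p) :
    succCell D p ∈ D ∧ (HasLeft D (succCell D p) ∨ HasBelow D (succCell D p)) := by
  unfold succCell
  split_ifs with hR
  · obtain ⟨q, hq, hq₁, hq₂⟩ := hR
    exact ⟨mem_of_le_of_le hD hp hq le_rfl (by simp) (by simp [hq₁]) (by simp; omega),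
      .inl ⟨p, hp, rfl, by simp⟩⟩
  · obtain ⟨q, hq, hq₁, hq₂⟩ := h.resolve_left hR
    exact ⟨mem_of_le_of_le hD hq hp (by simp; omega) (by simp [hq₁]) (by simp) le_rfl,
      .inr ⟨p, hp, rfl, by simp; omega⟩⟩

theorem predCell_mem (hD : (D : Set (ℕ × ℕ)).OrdConnected) (hp : p ∈ D)
    (h : HasLeft D p ∨ HasBelow D p) :
    predCell D p ∈ D ∧ (HasRight D (predCell D p) ∨ HasAbove D (predCell D p)) := by
  unfold predCell
  split_ifs with hL
  · obtain ⟨q, hq, hq₁, hq₂⟩ := hL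
    exact ⟨mem_of_le_of_le hD hq hp (by simp [hq₁]) (by simp; omega) le_rfl (by simp),
      .inl ⟨p, hp, rfl, by simp; omega⟩⟩
  · obtain ⟨q, hq, hq₁, hq₂⟩ := h.resolve_left hL
    exact ⟨mem_of_le_of_le hD hp hq (by simp) (by simp) (by simp; omega) (by simp [hq₁]),
      .inr ⟨p, hp, rfl, by simp⟩⟩

theorem predCell_succCell (hD : (D : Set (ℕ × ℕ)).OrdConnected)
    (hLB : ∀ q ∈ D, HasLeft D q → ¬HasBelow D q) (hp : p ∈ D)
    (h : HasRight D p ∨ HasAbove D p) : predCell D (succCell D p) = p := by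
  have hmem := (succCell_mem hD hp h).1
  by_cases hR : HasRight D p
  · rw [succCell, if_pos hR] at hmem ⊢
    rw [predCell, if_pos ⟨p, hp, rfl, by simp⟩]
    simp
  · obtain ⟨q, -, hq₁, hq₂⟩ := h.resolve_left hR
    rw [succCell, if_neg hR] at hmem ⊢
    rw [predCell, if_neg fun hL => hLB _ hmem hL ⟨p, hp, rfl, by simp; omega⟩]
    ext <;> simp; omega

theorem succCell_predCell (hD : (D : Set (ℕ × ℕ)).OrdConnected)
    (hRA : ∀ q ∈ D, HasRight D q → ¬HasAbove D q) (hp : p ∈ D)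
    (h : HasLeft D p ∨ HasBelow D p) : succCell D (predCell D p) = p := by
  have hmem := (predCell_mem hD hp h).1
  by_cases hL : HasLeft D p
  · rw [predCell, if_pos hL] at hmem ⊢
    obtain ⟨q, -, hq₁, hq₂⟩ := hL
    rw [succCell, if_pos ⟨p, hp, rfl, by simp; omega⟩]
    ext <;> simp; omega
  · rw [predCell, if_neg hL] at hmem ⊢
    rw [succCell, if_neg fun hR => hRA _ hmem hR ⟨p, hp, rfl, by simp⟩]
    simp

theorem hvWeight_eq_vhWeight_succCell (hD : (D : Set (ℕ × ℕ)).OrdConnected)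
    (hRA : ∀ q ∈ D, HasRight D q → ¬HasAbove D q) (hLB : ∀ q ∈ D, HasLeft D q → ¬HasBelow D q)
    (X Y : ℤ → A) (hp : p ∈ D) (h : HasRight D p ∨ HasAbove D p) :
    hvWeight D X Y p = vhWeight D X Y (succCell D p) := by
  have hmem := (succCell_mem hD hp h).1
  unfold hvWeight vhWeight
  by_cases hR : HasRight D p
  · rw [succCell, if_pos hR] at hmem ⊢
    have hL : HasLeft D (p.1, p.2 + 1) := ⟨p, hp, rfl, by simp⟩
    rw [if_neg (hRA p hp hR), if_pos hR, if_neg (hLB _ hmem hL), if_pos hL]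
    simp only [content]
    push_cast
    ring_nf
  · obtain ⟨q, -, hq₁, hq₂⟩ := h.resolve_left hR
    rw [succCell, if_neg hR] at hmem ⊢
    have hB : HasBelow D (p.1 - 1, p.2) := ⟨p, hp, rfl, by simp; omega⟩
    rw [if_pos (h.resolve_left hR), if_neg hR, if_pos hB, if_neg fun hL => hLB _ hmem hL hB]
    congr 2
    simp only [content]
    omega

open Classical in
theorem prod_hvWeight_eq_prod_vhWeight (hD : (D : Set (ℕ × ℕ)).OrdConnected) (X Y : ℤ → A)
    (hXY : ∀ c c', X c + Y c = X c' + Y c') :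
    ∏ p ∈ D, hvWeight D X Y p = ∏ p ∈ D, vhWeight D X Y p := by
  by_cases hcorner : ∃ p ∈ D, HasRight D p ∧ HasAbove D p
  · obtain ⟨p, hp, hR, hA⟩ := hcorner
    obtain ⟨q, hq, hL, hB⟩ := (exists_hasRight_hasAbove_iff hD).1 ⟨p, hp, hR, hA⟩
    rw [prod_eq_zero hp (by simp [hvWeight, hR, hA]), prod_eq_zero hq (by simp [vhWeight, hL, hB])]
  have hRA : ∀ p ∈ D, HasRight D p → ¬HasAbove D p := fun p hp hR hA => hcorner ⟨p, hp, hR, hA⟩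
  have hLB : ∀ p ∈ D, HasLeft D p → ¬HasBelow D p := fun p hp hL hB =>
    hcorner ((exists_hasRight_hasAbove_iff hD).2 ⟨p, hp, hL, hB⟩)
  have hsucc : ∀ p ∈ D.filter (fun p => HasRight D p ∨ HasAbove D p),
      succCell D p ∈ D.filter (fun p => HasLeft D p ∨ HasBelow D p) := fun p hp => by
    rw [mem_filter] at hp ⊢; exact succCell_mem hD hp.1 hp.2
  have hpred : ∀ p ∈ D.filter (fun p => HasLeft D p ∨ HasBelow D p),
      predCell D p ∈ D.filter (fun p => HasRight D p ∨ HasAbove D p) := fun p hp => by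
    rw [mem_filter] at hp ⊢; exact predCell_mem hD hp.1 hp.2
  have hleft : ∀ p ∈ D.filter (fun p => HasRight D p ∨ HasAbove D p),
      predCell D (succCell D p) = p := fun p hp => by
    rw [mem_filter] at hp; exact predCell_succCell hD hLB hp.1 hp.2
  have hright : ∀ p ∈ D.filter (fun p => HasLeft D p ∨ HasBelow D p),
      succCell D (predCell D p) = p := fun p hp => by
    rw [mem_filter] at hp; exact succCell_predCell hD hRA hp.1 hp.2
  rw [← prod_filter_mul_prod_filter_not D (fun p => HasRight D p ∨ HasAbove D p),
    ← prod_filter_mul_prod_filter_not D (fun p => HasLeft D p ∨ HasBelow D p)]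
  congr 1
  · exact prod_nbij' _ _ hsucc hpred hleft hright fun p hp => by
      rw [mem_filter] at hp; exact hvWeight_eq_vhWeight_succCell hD hRA hLB X Y hp.1 hp.2
  · rw [prod_eq_pow_card (b := X 0 + Y 0) fun p hp => by
        rw [mem_filter, not_or] at hp; rw [hvWeight, if_neg hp.2.2, if_neg hp.2.1, hXY],
      prod_eq_pow_card (b := X 0 + Y 0) fun p hp => by
        rw [mem_filter, not_or] at hp; rw [vhWeight, if_neg hp.2.2, if_neg hp.2.1, hXY]]
    have hcard := card_nbij' _ _ hsucc hpred hleft hright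
    have h₁ := card_filter_add_card_filter_not (s := D) fun p => HasRight D p ∨ HasAbove D p
    have h₂ := card_filter_add_card_filter_not (s := D) fun p => HasLeft D p ∨ HasBelow D p
    congr 1
    omega

end Ribbons

/-! ### Keys and fibres -/

section Keys

variable {NA : ℕ} {C : Finset (ℕ × ℕ)} {Q : Fin NA → Bool} {r s t t' : Fin NA}
  {κ : {p // p ∈ C} → Fin NA}

def collapse (r s : Fin NA) (t : Fin NA) : Fin NA := if t = s then r else t

theorem collapse_eq_left_iff : collapse r s t = r ↔ t = r ∨ t = s := by
  unfold collapse; split_ifs with h <;> simp [h]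

theorem collapse_of_ne_left (h : collapse r s t ≠ r) : collapse r s t = t := by
  unfold collapse at *; split_ifs at * with h' <;> simp_all

theorem collapse_ne_right (hs : (s : ℕ) = r + 1) : collapse r s t ≠ s := by
  unfold collapse; split_ifs with h
  · simp [Fin.ext_iff, hs]
  · exact h

theorem collapse_monotone (hs : (s : ℕ) = r + 1) : Monotone (collapse r s) := by
  intro t t' h
  rw [Fin.le_def] at h
  unfold collapse
  split_ifs with h₁ h₂ h₂ <;> rw [Fin.le_def] <;> rw [Fin.ext_iff] at * <;> omega

theorem le_of_collapse_le (hs : (s : ℕ) = r + 1) (h : collapse r s t ≤ collapse r s t')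
    (hr : collapse r s t = r → collapse r s t' = r → t ≤ t') : t ≤ t' := by
  unfold collapse at h hr
  rw [Fin.le_def]
  split_ifs at h hr with h₁ h₂ h₂ <;> rw [Fin.le_def] at * <;> rw [Fin.ext_iff] at * <;> omega

def region (r : Fin NA) (κ : {p // p ∈ C} → Fin NA) : Finset (ℕ × ℕ) :=
  (univ.filter fun u => κ u = r).map (Function.Embedding.subtype _)

theorem mem_region {p : ℕ × ℕ} : p ∈ region r κ ↔ ∃ h : p ∈ C, κ ⟨p, h⟩ = r := by
  simp [region]

theorem exists_mem_region_iff {φ : ℕ × ℕ → Prop} :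
    (∃ q ∈ region r κ, φ q) ↔ ∃ v, κ v = r ∧ φ v.1 := by
  simp [region]

theorem prod_region {M : Type*} [CommMonoid M] (f : ℕ × ℕ → M) :
    ∏ p ∈ region r κ, f p = ∏ u ∈ univ.filter (fun u => κ u = r), f u.1 :=
  prod_map _ _ _

/-- A key never takes the value `s`; the guard `κ u ≠ s` only makes `IsKey` independent of
the markings of `r` and `s`. -/
def IsKey (C : Finset (ℕ × ℕ)) (Q : Fin NA → Bool) (r s : Fin NA)
    (κ : {p // p ∈ C} → Fin NA) : Prop :=
  (∀ u v : {p // p ∈ C}, u.1.1 = v.1.1 → u.1.2 ≤ v.1.2 → κ u ≤ κ v) ∧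
  (∀ u v : {p // p ∈ C}, u.1.2 = v.1.2 → u.1.1 ≤ v.1.1 → κ u ≤ κ v) ∧
  (∀ u v : {p // p ∈ C}, u.1.2 = v.1.2 → u.1.1 ≠ v.1.1 → κ u ≠ r → κ u ≠ s →
    Q (κ u) = false → κ u ≠ κ v) ∧
  (∀ u v : {p // p ∈ C}, u.1.1 = v.1.1 → u.1.2 ≠ v.1.2 → κ u ≠ r → κ u ≠ s →
    Q (κ u) = true → κ u ≠ κ v)

theorem isKey_congr {Q' : Fin NA → Bool} (h : ∀ t, t ≠ r → t ≠ s → Q t = Q' t) :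
    IsKey C Q r s κ ↔ IsKey C Q' r s κ := by
  constructor <;> rintro ⟨hrow, hcol, hcs, hrs⟩ <;>
    refine ⟨hrow, hcol, fun u v h₁ h₂ hr hs hQ => hcs u v h₁ h₂ hr hs ?_,
      fun u v h₁ h₂ hr hs hQ => hrs u v h₁ h₂ hr hs ?_⟩ <;>
    simpa [h _ hr hs] using hQ

theorem IsKey.monotone (hC : (C : Set (ℕ × ℕ)).OrdConnected) (hκ : IsKey C Q r s κ) :
    Monotone κ := by
  intro u v h
  have hw : (u.1.1, v.1.2) ∈ C :=
    hC.out u.2 v.2 ⟨Prod.le_def.2 ⟨le_rfl, h.2⟩, Prod.le_def.2 ⟨h.1, le_rfl⟩⟩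
  exact (hκ.1 u ⟨_, hw⟩ rfl h.2).trans (hκ.2.1 ⟨_, hw⟩ v rfl h.1)

theorem IsKey.region_ordConnected (hC : (C : Set (ℕ × ℕ)).OrdConnected)
    (hκ : IsKey C Q r s κ) : (region r κ : Set (ℕ × ℕ)).OrdConnected := by
  refine ⟨fun p hp q hq w hw => ?_⟩
  obtain ⟨hpC, hp⟩ := mem_region.1 hp
  obtain ⟨hqC, hq⟩ := mem_region.1 hq
  exact mem_region.2 ⟨hC.out hpC hqC hw,
    le_antisymm (hq ▸ hκ.monotone hC (show (⟨w, _⟩ : {p // p ∈ C}) ≤ ⟨q, hqC⟩ from hw.2))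
      (hp ▸ hκ.monotone hC (show (⟨p, hpC⟩ : {p // p ∈ C}) ≤ ⟨w, _⟩ from hw.1))⟩

def IsSuperTabOn (C : Finset (ℕ × ℕ)) (Q : Fin NA → Bool) (T : {p // p ∈ C} → Fin NA)
    (S : {p // p ∈ C} → Prop) : Prop :=
  (∀ u v, S u → S v → u.1.1 = v.1.1 → u.1.2 ≤ v.1.2 → T u ≤ T v) ∧
  (∀ u v, S u → S v → u.1.2 = v.1.2 → u.1.1 ≤ v.1.1 → T u ≤ T v) ∧
  (∀ u v, S u → S v → u.1.2 = v.1.2 → u.1.1 ≠ v.1.1 → Q (T u) = false → T u ≠ T v) ∧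
  (∀ u v, S u → S v → u.1.1 = v.1.1 → u.1.2 ≠ v.1.2 → Q (T u) = true → T u ≠ T v)

theorem isSuperTab_iff_isKey (hs : (s : ℕ) = r + 1) {T : {p // p ∈ C} → Fin NA} :
    IsSuperTab C Q T ↔ IsKey C Q r s (collapse r s ∘ T) ∧
      IsSuperTabOn C Q T (fun u => collapse r s (T u) = r) := by
  constructor
  · rintro ⟨hrow, hcol, hcs, hrs⟩
    refine ⟨⟨fun u v h₁ h₂ => collapse_monotone hs (hrow u v h₁ h₂),
      fun u v h₁ h₂ => collapse_monotone hs (hcol u v h₁ h₂), ?_, ?_⟩,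
      fun u v _ _ => hrow u v, fun u v _ _ => hcol u v, fun u v _ _ => hcs u v,
      fun u v _ _ => hrs u v⟩
    · intro u v h₁ h₂ hr _ hQ heq
      have hu := collapse_of_ne_left hr
      have hv := collapse_of_ne_left (heq ▸ hr)
      exact hcs u v h₁ h₂ (hu ▸ hQ) (hu.symm.trans (heq.trans hv))
    · intro u v h₁ h₂ hr _ hQ heq
      have hu := collapse_of_ne_left hr
      have hv := collapse_of_ne_left (heq ▸ hr)
      exact hrs u v h₁ h₂ (hu ▸ hQ) (hu.symm.trans (heq.trans hv))
  · rintro ⟨⟨krow, kcol, kcs, krs⟩, orow, ocol, ocs, ors⟩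
    refine ⟨fun u v h₁ h₂ => le_of_collapse_le hs (krow u v h₁ h₂) (orow u v · · h₁ h₂),
      fun u v h₁ h₂ => le_of_collapse_le hs (kcol u v h₁ h₂) (ocol u v · · h₁ h₂), ?_, ?_⟩
    · intro u v h₁ h₂ hQ heq
      by_cases hu : collapse r s (T u) = r
      · exact ocs u v hu (show collapse r s (T v) = r by rwa [← heq]) h₁ h₂ hQ heq
      · refine kcs u v h₁ h₂ hu (collapse_ne_right hs) ?_ (congrArg (collapse r s) heq)
        simpa [collapse_of_ne_left hu] using hQ
    · intro u v h₁ h₂ hQ heq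
      by_cases hu : collapse r s (T u) = r
      · exact ors u v hu (show collapse r s (T v) = r by rwa [← heq]) h₁ h₂ hQ heq
      · refine krs u v h₁ h₂ hu (collapse_ne_right hs) ?_ (congrArg (collapse r s) heq)
        simpa [collapse_of_ne_left hu] using hQ

/-- With `r` unprimed and `s` primed, the `r`s of a tableau form a horizontal strip and its
`s`s a vertical strip (`HV`); with the markings swapped, the other way round (`VH`). -/
def HVAllowed (r s : Fin NA) (κ : {p // p ∈ C} → Fin NA) (u : {p // p ∈ C}) (t : Fin NA) :
    Prop :=
  κ u = r → (HasRight (region r κ) u.1 → t = r) ∧ (HasAbove (region r κ) u.1 → t = s)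

def VHAllowed (r s : Fin NA) (κ : {p // p ∈ C} → Fin NA) (u : {p // p ∈ C}) (t : Fin NA) :
    Prop :=
  κ u = r → (HasLeft (region r κ) u.1 → t = s) ∧ (HasBelow (region r κ) u.1 → t = r)

theorem le_and_le_of_collapse_eq_left (hs : (s : ℕ) = r + 1) (h : collapse r s t = r) :
    r ≤ t ∧ t ≤ s := by
  rcases collapse_eq_left_iff.1 h with h | h <;> rw [h, Fin.le_def] <;> omega

section Fillings

variable {T : {p // p ∈ C} → Fin NA}

theorem IsSuperTabOn.hvAllowed (hs : (s : ℕ) = r + 1) (hQr : Q r = false) (hQs : Q s = true)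
    (hT : IsSuperTabOn C Q T (fun u => collapse r s (T u) = r)) (u : {p // p ∈ C}) :
    HVAllowed r s (collapse r s ∘ T) u (T u) := by
  obtain ⟨orow, ocol, ocs, ors⟩ := hT
  intro hu
  refine ⟨fun h => ?_, fun h => ?_⟩
  · obtain ⟨v, hv, h₁, h₂⟩ := exists_mem_region_iff.1 h
    by_contra hne
    have hu' := (collapse_eq_left_iff.1 hu).resolve_left hne
    have hv' : T v = s :=
      le_antisymm (le_and_le_of_collapse_eq_left hs hv).2 (hu' ▸ orow u v hu hv h₁.symm h₂.le)
    exact ors u v hu hv h₁.symm h₂.ne (hu' ▸ hQs) (hu'.trans hv'.symm)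
  · obtain ⟨v, hv, h₁, h₂⟩ := exists_mem_region_iff.1 h
    by_contra hne
    have hu' := (collapse_eq_left_iff.1 hu).resolve_right hne
    have hv' : T v = r :=
      le_antisymm (hu' ▸ ocol v u hv hu h₁ h₂.le) (le_and_le_of_collapse_eq_left hs hv).1
    exact ocs u v hu hv h₁.symm h₂.ne' (hu' ▸ hQr) (hu'.trans hv'.symm)

theorem IsSuperTabOn.of_hvAllowed (hs : (s : ℕ) = r + 1) (hQr : Q r = false) (hQs : Q s = true)
    (hT : ∀ u, HVAllowed r s (collapse r s ∘ T) u (T u)) :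
    IsSuperTabOn C Q T (fun u => collapse r s (T u) = r) := by
  have hrs : r ≠ s := fun h => by simp [h] at hs
  have hright : ∀ u v, collapse r s (T u) = r → collapse r s (T v) = r →
      u.1.1 = v.1.1 → u.1.2 < v.1.2 → T u = r := fun u v hu hv h₁ h₂ =>
    (hT u hu).1 (exists_mem_region_iff.2 ⟨v, hv, h₁.symm, h₂⟩)
  have habove : ∀ u v, collapse r s (T u) = r → collapse r s (T v) = r →
      u.1.2 = v.1.2 → u.1.1 < v.1.1 → T v = s := fun u v hu hv h₁ h₂ =>
    (hT v hv).2 (exists_mem_region_iff.2 ⟨u, hu, h₁, h₂⟩)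
  refine ⟨fun u v hu hv h₁ h₂ => ?_, fun u v hu hv h₁ h₂ => ?_, fun u v hu hv h₁ h₂ hQ => ?_,
    fun u v hu hv h₁ h₂ hQ => ?_⟩
  · rcases h₂.lt_or_eq with h₂ | h₂
    · exact hright u v hu hv h₁ h₂ ▸ (le_and_le_of_collapse_eq_left hs hv).1
    · rw [Subtype.ext (Prod.ext h₁ h₂)]
  · rcases h₂.lt_or_eq with h₂ | h₂
    · exact habove u v hu hv h₁ h₂ ▸ (le_and_le_of_collapse_eq_left hs hu).2
    · rw [Subtype.ext (Prod.ext h₂ h₁)]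
  · have hu' : T u = r :=
      (collapse_eq_left_iff.1 hu).resolve_right fun h => by simp [h, hQs] at hQ
    rcases h₂.lt_or_gt with h₂ | h₂
    · rw [hu', habove u v hu hv h₁ h₂]; exact hrs
    · exact absurd (hu'.symm.trans (habove v u hv hu h₁.symm h₂)) hrs
  · have hu' : T u = s :=
      (collapse_eq_left_iff.1 hu).resolve_left fun h => by simp [h, hQr] at hQ
    rcases h₂.lt_or_gt with h₂ | h₂
    · exact absurd (hu'.symm.trans (hright u v hu hv h₁ h₂)) hrs.symm
    · rw [hu', hright v u hv hu h₁.symm h₂]; exact hrs.symm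

theorem IsSuperTabOn.vhAllowed (hs : (s : ℕ) = r + 1) (hQr : Q r = true) (hQs : Q s = false)
    (hT : IsSuperTabOn C Q T (fun u => collapse r s (T u) = r)) (u : {p // p ∈ C}) :
    VHAllowed r s (collapse r s ∘ T) u (T u) := by
  obtain ⟨orow, ocol, ocs, ors⟩ := hT
  intro hu
  refine ⟨fun h => ?_, fun h => ?_⟩
  · obtain ⟨v, hv, h₁, h₂⟩ := exists_mem_region_iff.1 h
    by_contra hne
    have hu' := (collapse_eq_left_iff.1 hu).resolve_right hne
    have hv' : T v = r :=
      le_antisymm (hu' ▸ orow v u hv hu h₁ h₂.le) (le_and_le_of_collapse_eq_left hs hv).1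
    exact ors v u hv hu h₁ h₂.ne (hv' ▸ hQr) (hv'.trans hu'.symm)
  · obtain ⟨v, hv, h₁, h₂⟩ := exists_mem_region_iff.1 h
    by_contra hne
    have hu' := (collapse_eq_left_iff.1 hu).resolve_left hne
    have hv' : T v = s :=
      le_antisymm (le_and_le_of_collapse_eq_left hs hv).2 (hu' ▸ ocol u v hu hv h₁.symm h₂.le)
    exact ocs u v hu hv h₁.symm h₂.ne (hu' ▸ hQs) (hu'.trans hv'.symm)

theorem IsSuperTabOn.of_vhAllowed (hs : (s : ℕ) = r + 1) (hQr : Q r = true) (hQs : Q s = false)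
    (hT : ∀ u, VHAllowed r s (collapse r s ∘ T) u (T u)) :
    IsSuperTabOn C Q T (fun u => collapse r s (T u) = r) := by
  have hrs : r ≠ s := fun h => by simp [h] at hs
  have hleft : ∀ u v, collapse r s (T u) = r → collapse r s (T v) = r →
      u.1.1 = v.1.1 → u.1.2 < v.1.2 → T v = s := fun u v hu hv h₁ h₂ =>
    (hT v hv).1 (exists_mem_region_iff.2 ⟨u, hu, h₁, h₂⟩)
  have hbelow : ∀ u v, collapse r s (T u) = r → collapse r s (T v) = r →
      u.1.2 = v.1.2 → u.1.1 < v.1.1 → T u = r := fun u v hu hv h₁ h₂ =>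
    (hT u hu).2 (exists_mem_region_iff.2 ⟨v, hv, h₁.symm, h₂⟩)
  refine ⟨fun u v hu hv h₁ h₂ => ?_, fun u v hu hv h₁ h₂ => ?_, fun u v hu hv h₁ h₂ hQ => ?_,
    fun u v hu hv h₁ h₂ hQ => ?_⟩
  · rcases h₂.lt_or_eq with h₂ | h₂
    · exact hleft u v hu hv h₁ h₂ ▸ (le_and_le_of_collapse_eq_left hs hu).2
    · rw [Subtype.ext (Prod.ext h₁ h₂)]
  · rcases h₂.lt_or_eq with h₂ | h₂
    · exact hbelow u v hu hv h₁ h₂ ▸ (le_and_le_of_collapse_eq_left hs hv).1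
    · rw [Subtype.ext (Prod.ext h₂ h₁)]
  · have hu' : T u = s :=
      (collapse_eq_left_iff.1 hu).resolve_left fun h => by simp [h, hQr] at hQ
    rcases h₂.lt_or_gt with h₂ | h₂
    · exact absurd (hu'.symm.trans (hbelow u v hu hv h₁ h₂)) hrs.symm
    · rw [hu', hbelow v u hv hu h₁.symm h₂]; exact hrs.symm
  · have hu' : T u = r :=
      (collapse_eq_left_iff.1 hu).resolve_right fun h => by simp [h, hQs] at hQ
    rcases h₂.lt_or_gt with h₂ | h₂
    · rw [hu', hleft u v hu hv h₁ h₂]; exact hrs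
    · exact absurd (hu'.symm.trans (hleft v u hv hu h₁.symm h₂)) hrs

theorem isSuperTab_iff_hvAllowed (hs : (s : ℕ) = r + 1) (hQr : Q r = false)
    (hQs : Q s = true) :
    IsSuperTab C Q T ↔
      IsKey C Q r s (collapse r s ∘ T) ∧ ∀ u, HVAllowed r s (collapse r s ∘ T) u (T u) := by
  rw [isSuperTab_iff_isKey hs]
  exact and_congr_right fun _ => ⟨(·.hvAllowed hs hQr hQs), .of_hvAllowed hs hQr hQs⟩

theorem isSuperTab_iff_vhAllowed (hs : (s : ℕ) = r + 1) (hQr : Q r = true)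
    (hQs : Q s = false) :
    IsSuperTab C Q T ↔
      IsKey C Q r s (collapse r s ∘ T) ∧ ∀ u, VHAllowed r s (collapse r s ∘ T) u (T u) := by
  rw [isSuperTab_iff_isKey hs]
  exact and_congr_right fun _ => ⟨(·.vhAllowed hs hQr hQs), .of_vhAllowed hs hQr hQs⟩

end Fillings

open Classical in
theorem sum_filter_prod_eq_sum_prod_sum {ι α β R : Type*} [Fintype ι] [Fintype α] [Fintype β]
    [CommSemiring R] (g : α → β) (K : (ι → β) → Prop) (L : (ι → β) → ι → α → Prop)
    (f : ι → α → R) :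
    ∑ T ∈ univ.filter (fun T : ι → α => K (g ∘ T) ∧ ∀ i, L (g ∘ T) i (T i)), ∏ i, f i (T i) =
      ∑ κ ∈ univ.filter K, ∏ i, ∑ t ∈ univ.filter (fun t => g t = κ i ∧ L κ i t), f i t := by
  rw [← sum_fiberwise _ (fun T => g ∘ T), sum_filter]
  refine sum_congr rfl fun κ _ => ?_
  rw [prod_univ_sum]
  split_ifs with hK
  · refine sum_congr ?_ fun _ _ => rfl
    ext T
    simp only [mem_filter, mem_univ, true_and, Fintype.mem_piFinset, funext_iff,
      Function.comp_apply]
    constructor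
    · rintro ⟨⟨-, hL⟩, hg⟩ i
      exact ⟨hg i, (funext hg : g ∘ T = κ) ▸ hL i⟩
    · intro h
      have hg : g ∘ T = κ := funext fun i => (h i).1
      exact ⟨⟨hg ▸ hK, fun i => hg ▸ (h i).2⟩, fun i => (h i).1⟩
  · refine sum_eq_zero fun T hT => ?_
    simp only [mem_filter, mem_univ, true_and] at hT
    exact absurd (hT.2 ▸ hT.1.1) hK

open Classical in
theorem tabSum_eq_sum_isKey_hv (hs : (s : ℕ) = r + 1) (hQr : Q r = false) (hQs : Q s = true)
    (w : Fin NA → ℤ → A) :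
    tabSum C Q w = ∑ κ ∈ univ.filter (IsKey C Q r s), ∏ u,
      ∑ t ∈ univ.filter (fun t => collapse r s t = κ u ∧ HVAllowed r s κ u t),
        w t (content u.1) := by
  rw [tabSum]
  refine (sum_congr ?_ fun _ _ => rfl).trans ((sum_filter_prod_eq_sum_prod_sum (collapse r s)
    (IsKey C Q r s) (HVAllowed r s) fun u t => w t (content u.1)).trans ?_)
  · ext T
    simp only [mem_filter, mem_univ, true_and]
    exact isSuperTab_iff_hvAllowed hs hQr hQs
  · congr!

open Classical in
theorem tabSum_eq_sum_isKey_vh (hs : (s : ℕ) = r + 1) (hQr : Q r = true) (hQs : Q s = false)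
    (w : Fin NA → ℤ → A) :
    tabSum C Q w = ∑ κ ∈ univ.filter (IsKey C Q r s), ∏ u,
      ∑ t ∈ univ.filter (fun t => collapse r s t = κ u ∧ VHAllowed r s κ u t),
        w t (content u.1) := by
  rw [tabSum]
  refine (sum_congr ?_ fun _ _ => rfl).trans ((sum_filter_prod_eq_sum_prod_sum (collapse r s)
    (IsKey C Q r s) (VHAllowed r s) fun u t => w t (content u.1)).trans ?_)
  · ext T
    simp only [mem_filter, mem_univ, true_and]
    exact isSuperTab_iff_vhAllowed hs hQr hQs
  · congr!

open Classical in
theorem sum_filter_collapse_eq_left {M : Type*} [AddCommMonoid M] (hrs : r ≠ s)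
    (φ : Fin NA → Prop) (f : Fin NA → M) :
    ∑ t ∈ univ.filter (fun t => collapse r s t = r ∧ φ t), f t =
      (if φ r then f r else 0) + (if φ s then f s else 0) := by
  have : univ.filter (fun t => collapse r s t = r ∧ φ t) = ({r, s} : Finset (Fin NA)).filter φ := by
    ext t; simp [collapse_eq_left_iff]
  rw [this, sum_filter, sum_pair hrs]

open Classical in
theorem sum_hvAllowed_eq_hvWeight (hrs : r ≠ s) {u : {p // p ∈ C}} (hu : κ u = r)
    (w : Fin NA → ℤ → A) :
    ∑ t ∈ univ.filter (fun t => collapse r s t = κ u ∧ HVAllowed r s κ u t), w t (content u.1) =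
      hvWeight (region r κ) (w r) (w s) u.1 := by
  rw [hu, sum_filter_collapse_eq_left hrs]
  simp [hvWeight, HVAllowed, hu, hrs, hrs.symm, ite_not]

open Classical in
theorem sum_vhAllowed_eq_vhWeight (hrs : r ≠ s) {u : {p // p ∈ C}} (hu : κ u = r)
    {w w' : Fin NA → ℤ → A} (hwr : ∀ c, w' r c = w s (c - 1)) (hws : ∀ c, w' s c = w r (c - 1)) :
    ∑ t ∈ univ.filter (fun t => collapse r s t = κ u ∧ VHAllowed r s κ u t), w' t (content u.1) =
      vhWeight (region r κ) (w r) (w s) u.1 := by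
  rw [hu, sum_filter_collapse_eq_left hrs]
  simp [vhWeight, VHAllowed, hu, hrs, hrs.symm, ite_not, hwr, hws, add_comm]

open Classical in
theorem prod_sum_hvAllowed_eq_prod_sum_vhAllowed (hC : (C : Set (ℕ × ℕ)).OrdConnected)
    (hs : (s : ℕ) = r + 1) (hκ : IsKey C Q r s κ) (w w' : Fin NA → ℤ → A)
    (hout : ∀ t c, t ≠ r → t ≠ s → w' t c = w t c) (hwr : ∀ c, w' r c = w s (c - 1))
    (hws : ∀ c, w' s c = w r (c - 1)) (hsum : ∀ c c', w r c + w s c = w r c' + w s c') :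
    ∏ u, ∑ t ∈ univ.filter (fun t => collapse r s t = κ u ∧ HVAllowed r s κ u t),
        w t (content u.1) =
      ∏ u, ∑ t ∈ univ.filter (fun t => collapse r s t = κ u ∧ VHAllowed r s κ u t),
        w' t (content u.1) := by
  have hrs : r ≠ s := fun h => by simp [h] at hs
  have hregion := prod_hvWeight_eq_prod_vhWeight (hκ.region_ordConnected hC) (w r) (w s) hsum
  rw [prod_region, prod_region] at hregion
  rw [← prod_filter_mul_prod_filter_not univ (fun u => κ u = r),
    ← prod_filter_mul_prod_filter_not univ (fun u => κ u = r)]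
  congr 1
  · refine (prod_congr rfl fun u hu => ?_).trans (hregion.trans (prod_congr rfl fun u hu => ?_))
    · exact sum_hvAllowed_eq_hvWeight hrs (mem_filter.1 hu).2 w
    · exact (sum_vhAllowed_eq_vhWeight hrs (mem_filter.1 hu).2 hwr hws).symm
  · refine prod_congr rfl fun u hu => ?_
    rw [mem_filter] at hu
    refine sum_congr (filter_congr fun t _ => by simp [HVAllowed, VHAllowed, hu.2])
      fun t ht => ?_
    have hne : ¬(t = r ∨ t = s) := fun h =>
      hu.2 (((mem_filter.1 ht).2.1).symm.trans (collapse_eq_left_iff.2 h))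
    rw [not_or] at hne
    exact (hout _ _ hne.1 hne.2).symm

open Classical in
theorem tabSum_eq_tabSum_of_swap {P P' : Fin NA → Bool} (hC : (C : Set (ℕ × ℕ)).OrdConnected)
    (hs : (s : ℕ) = r + 1) (hPr : P r = false) (hPs : P s = true)
    (hP' : ∀ t, P' t = P (Equiv.swap r s t)) (w w' : Fin NA → ℤ → A)
    (hout : ∀ t c, t ≠ r → t ≠ s → w' t c = w t c) (hwr : ∀ c, w' r c = w s (c - 1))
    (hws : ∀ c, w' s c = w r (c - 1)) (hsum : ∀ c c', w r c + w s c = w r c' + w s c') :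
    tabSum C P w = tabSum C P' w' := by
  have hP'r : P' r = true := by rw [hP', Equiv.swap_apply_left, hPs]
  have hP's : P' s = false := by rw [hP', Equiv.swap_apply_right, hPr]
  rw [tabSum_eq_sum_isKey_hv hs hPr hPs, tabSum_eq_sum_isKey_vh hs hP'r hP's]
  refine sum_congr (filter_congr fun κ _ => isKey_congr fun t htr hts => ?_) fun κ hκ =>
    prod_sum_hvAllowed_eq_prod_sum_vhAllowed hC hs (mem_filter.1 hκ).2 w w' hout hwr hws hsum
  rw [hP', Equiv.swap_apply_of_ne_of_ne htr hts]

end Keys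

theorem adjacent_swap_invariance_general (m n : ℕ) (prm : Fin (m + n) → Bool)
    (r : Fin (m + n)) (hr : (r : ℕ) + 1 < m + n)
    (hru : prm r = false) (hrp : prm ⟨(r : ℕ) + 1, hr⟩ = true)
    (prm' : Fin (m + n) → Bool)
    (hprm' : prm' = fun r' =>
      if r' = r then true else if (r' : ℕ) = (r : ℕ) + 1 then false else prm r')
    (lam mu : List ℕ) (hlam : IsPartition lam) (hmu : IsPartition mu)
    (x : Fin m → A) (y : Fin n → A) (a : ℤ → A) :
    tabSum (cells lam mu) prm (wFact prm x y a) =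
      tabSum (cells lam mu) prm' (wFact prm' x y a) := by
  set s : Fin (m + n) := ⟨(r : ℕ) + 1, hr⟩
  have hs : (s : ℕ) = r + 1 := rfl
  have hP' : ∀ t, prm' t = prm (Equiv.swap r s t) := by
    intro t
    rcases eq_or_ne t r with rfl | htr
    · simp [hprm', hrp]
    rcases eq_or_ne t s with rfl | hts
    · simp [hprm', htr, hru, hs]
    · have : (t : ℕ) ≠ r + 1 := fun h => hts (Fin.ext h)
      simp [hprm', htr, this, Equiv.swap_apply_of_ne_of_ne htr hts]
  exact tabSum_eq_tabSum_of_swap (cells_ordConnected hlam.1 hmu.1) hs hru hrp hP' _ _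
    (fun t c htr hts => wFact_swap_of_ne x y a hs hP' htr hts c)
    (wFact_swap_left x y a hs hru hrp hP') (wFact_swap_right x y a hs hru hrp hP')
    (wFact_add_wFact_succ x y a hs hru hrp)

/-- **Cyclic-map invariance under an adjacent unprimed–primed swap**: if in the marked
alphabet `R′` the letter `r` is unprimed and the letter `r + 1` is primed, and `R″` is
obtained from `R′` by instead taking `r` primed and `r + 1` unprimed (all other letters
retaining their markings), then the factorial supersymmetric skew Schur functions for
`R′` and `R″` coincide. -/
theorem adjacent_swap_invariance (m n : ℕ) (prm : Fin (m + n) → Bool)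
    (hprm : (Finset.univ.filter fun r => prm r = true).card = n)
    (r : Fin (m + n)) (hr : (r : ℕ) + 1 < m + n)
    (hru : prm r = false) (hrp : prm ⟨(r : ℕ) + 1, hr⟩ = true)
    (prm' : Fin (m + n) → Bool)
    (hprm' : prm' = fun r' =>
      if r' = r then true else if (r' : ℕ) = (r : ℕ) + 1 then false else prm r')
    (lam mu : List ℕ) (hlam : IsPartition lam) (hmu : IsPartition mu)
    (hsub : Contained mu lam)
    (x : Fin m → A) (y : Fin n → A) (a : ℤ → A) :
    tabSum (cells lam mu) prm (wFact prm x y a) =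
      tabSum (cells lam mu) prm' (wFact prm' x y a) :=
  adjacent_swap_invariance_general m n prm r hr hru hrp prm' hprm' lam mu hlam hmu x y a

end SuperSchur
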